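/- Let G be an ADMG on V, C a partition of V with acyclic quotient graph G_C (a C-DAG), and let X, Y, Z be disjoint sets of clusters. If X and Y are d-separated by Z in G_C (every path in G_C between a cluster of X and a cluster of Y is blocked by Z), then in G the vertex sets ∪X and ∪Y are d-separated by ∪Z. -/
import Mathlib


/-- An acyclic directed mixed graph skeleton: a directed edge relation
together with a symmetric bidirected edge relation. -/
structure MixedGraph (V : Type) where
  dir : V → V → Prop
  bi : V → V → Prop
  bi_symm : ∀ a b, bi a b → bi b a

namespace MixedGraph

variable {V : Type} {I : Type}

/-- Adjacency: a directed edge in either orientation or a bidirected edge. -/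
def Adj (G : MixedGraph V) (a b : V) : Prop :=
  G.dir a b ∨ G.dir b a ∨ G.bi a b

/-- Acyclicity of the directed part. -/
def Acyclic (G : MixedGraph V) : Prop :=
  ∀ a, ¬ Relation.TransGen G.dir a a

/-- The quotient (cluster) graph of `G` by the partition given by the fibers of `π`. -/
def quot (G : MixedGraph V) (π : V → I) : MixedGraph I where
  dir i j := i ≠ j ∧ ∃ a b, π a = i ∧ π b = j ∧ G.dir a b
  bi i j := i ≠ j ∧ ∃ a b, π a = i ∧ π b = j ∧ G.bi a b
  bi_symm := by
    rintro i j ⟨hne, a, b, ha, hb, h⟩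
    exact ⟨hne.symm, b, a, hb, ha, G.bi_symm a b h⟩

/-- The mutilated graph: delete all edges with an arrowhead into `X`
and all directed edges out of `Z`. -/
def mutil (G : MixedGraph V) (X Z : Set V) : MixedGraph V where
  dir a b := G.dir a b ∧ b ∉ X ∧ a ∉ Z
  bi a b := G.bi a b ∧ a ∉ X ∧ b ∉ X
  bi_symm := by
    rintro a b ⟨h, ha, hb⟩
    exact ⟨G.bi_symm a b h, hb, ha⟩

/-- Type of an edge as traversed along a walk. -/
inductive EType : Type
  | fwd   -- a → b
  | bwd   -- a ← b
  | bidir -- a ↔ b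
deriving DecidableEq

/-- The step relation of a walk. -/
def step (G : MixedGraph V) (a : V) (e : EType) (b : V) : Prop :=
  match e with
  | .fwd => G.dir a b
  | .bwd => G.dir b a
  | .bidir => G.bi a b

/-- A walk starting at a vertex, given by a list of (edge type, next vertex). -/
def IsWalk (G : MixedGraph V) : V → List (EType × V) → Prop
  | _, [] => True
  | a, (e, b) :: rest => G.step a e b ∧ IsWalk G b rest

/-- The final vertex of a walk. -/
def walkEnd : V → List (EType × V) → V
  | a, [] => a
  | _, (_, b) :: rest => walkEnd b rest

/-- `b` is a descendant of `a` (along directed edges, reflexively). -/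
def Desc (G : MixedGraph V) : V → V → Prop :=
  Relation.ReflTransGen G.dir

/-- Whether an interior vertex between two consecutive steps is a collider:
an arrowhead on both sides. -/
def colliderAt (e₁ e₂ : EType) : Prop :=
  (e₁ = EType.fwd ∨ e₁ = EType.bidir) ∧ (e₂ = EType.bwd ∨ e₂ = EType.bidir)

/-- A walk is active (d-connecting) given a conditioning set `S`:
every interior non-collider lies outside `S` and every interior collider
is in `S` or has a descendant in `S`. -/
def Active (G : MixedGraph V) (S : Set V) : List (EType × V) → Prop
  | [] => True
  | [_] => True
  | (e₁, b) :: (e₂, c) :: rest =>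
      ((colliderAt e₁ e₂ ∧ ∃ d ∈ S, G.Desc b d) ∨ (¬ colliderAt e₁ e₂ ∧ b ∉ S))
      ∧ Active G S ((e₂, c) :: rest)

/-- The walk contains an (interior) collider belonging to `T`. -/
def HasColliderIn (G : MixedGraph V) (T : Set V) : List (EType × V) → Prop
  | (e₁, b) :: (e₂, c) :: rest =>
      (colliderAt e₁ e₂ ∧ b ∈ T) ∨ HasColliderIn G T ((e₂, c) :: rest)
  | _ => False

/-- `X` and `Y` are d-connected given `S`: some active walk joins them. -/
def DConn (G : MixedGraph V) (S X Y : Set V) : Prop :=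
  ∃ x ∈ X, ∃ w : List (EType × V),
    w ≠ [] ∧ G.IsWalk x w ∧ walkEnd x w ∈ Y ∧ G.Active S w

/-- d-separation: no active walk between `X` and `Y` given `S`. -/
def DSep (G : MixedGraph V) (S X Y : Set V) : Prop :=
  ¬ G.DConn S X Y

open Classical in
/-- Contract a walk in `G` to a walk in the quotient graph: drop in-cluster
edges and keep cluster-crossing edges. -/
noncomputable def contract (π : V → I) : V → List (EType × V) → List (EType × I)
  | _, [] => []
  | a, (e, b) :: rest =>
      if π a = π b then contract π b rest
      else (e, π b) :: contract π b rest

lemma active_tail (G : MixedGraph V) {S : Set V} :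
    ∀ {p : EType × V} {l : List (EType × V)}, G.Active S (p :: l) → G.Active S l
  | _, [], _ => trivial
  | _, (e, c) :: rest, h => h.2

lemma quot_desc (G : MixedGraph V) (π : V → I) {a d : V} (h : G.Desc a d) :
    (G.quot π).Desc (π a) (π d) := by
  induction h with
  | refl => exact Relation.ReflTransGen.refl
  | @tail b c h1 h2 ih =>
      by_cases hpi : π b = π c
      · rwa [← hpi]
      · exact ih.tail ⟨hpi, b, c, rfl, rfl, h2⟩

lemma contract_isWalk (G : MixedGraph V) (π : V → I) :
    ∀ (w : List (EType × V)) (a : V), G.IsWalk a w →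
      (G.quot π).IsWalk (π a) (contract π a w) := by
  intro w
  induction w with
  | nil => intro a _; trivial
  | cons p rest ih =>
      obtain ⟨e, b⟩ := p
      intro a hw
      obtain ⟨hstep, hwrest⟩ := hw
      by_cases hpi : π a = π b
      · rw [contract, if_pos hpi, hpi]
        exact ih b hwrest
      · rw [contract, if_neg hpi]
        refine ⟨?_, ih b hwrest⟩
        cases e with
        | fwd => exact ⟨hpi, a, b, rfl, rfl, hstep⟩
        | bwd => exact ⟨Ne.symm hpi, b, a, rfl, rfl, hstep⟩
        | bidir => exact ⟨hpi, a, b, rfl, rfl, hstep⟩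

lemma contract_end (π : V → I) :
    ∀ (w : List (EType × V)) (a : V),
      π (walkEnd a w) = walkEnd (π a) (contract π a w) := by
  intro w
  induction w with
  | nil => intro a; rfl
  | cons p rest ih =>
      obtain ⟨e, b⟩ := p
      intro a
      by_cases hpi : π a = π b
      · rw [walkEnd, contract, if_pos hpi, hpi]
        exact ih b
      · rw [walkEnd, contract, if_neg hpi, walkEnd]
        exact ih b

lemma contract_ne_nil (π : V → I) :
    ∀ (w : List (EType × V)) (a : V),
      π a ≠ π (walkEnd a w) → contract π a w ≠ [] := by
  intro w
  induction w with
  | nil => intro a hne; exact absurd rfl hne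
  | cons p rest ih =>
      obtain ⟨e, b⟩ := p
      intro a hne
      by_cases hpi : π a = π b
      · rw [contract, if_pos hpi]
        exact ih b (by rw [← hpi]; exact hne)
      · rw [contract, if_neg hpi]
        simp

/-- Key lemma: if a walk starts at `a` with an arrowhead into `a`, and the
first cluster-crossing edge also has an arrowhead on the near side, then some
vertex of the initial in-cluster segment is a collider, hence has a descendant
in the conditioning set. -/
lemma exit_collider (G : MixedGraph V) (π : V → I) (Z : Set I) :
    ∀ (w : List (EType × V)) (a : V) (e₁ : EType),
      (e₁ = EType.fwd ∨ e₁ = EType.bidir) →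
      G.IsWalk a w →
      G.Active {v | π v ∈ Z} ((e₁, a) :: w) →
      ∀ e' c' L', contract π a w = (e', c') :: L' →
      (e' = EType.bwd ∨ e' = EType.bidir) →
      ∃ d, π d ∈ Z ∧ G.Desc a d := by
  intro w
  induction w with
  | nil =>
      intro a e₁ _ _ _ e' c' L' hL _
      rw [contract] at hL
      exact absurd hL (by simp)
  | cons p rest ih =>
      obtain ⟨e₂, b⟩ := p
      intro a e₁ he₁ hw hact e' c' L' hL he'
      obtain ⟨hstep, hwrest⟩ := hw
      obtain ⟨hcl, hactrest⟩ := hact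
      by_cases hpi : π a = π b
      · rw [contract, if_pos hpi] at hL
        by_cases he₂ : e₂ = EType.fwd
        · rcases hcl with ⟨_, d, hd, hdesc⟩ | ⟨_, _⟩
          · exact ⟨d, hd, hdesc⟩
          · subst he₂
            obtain ⟨d, hd, hdesc⟩ :=
              ih b EType.fwd (Or.inl rfl) hwrest hactrest e' c' L' hL he'
            have hdir : G.dir a b := hstep
            exact ⟨d, hd, Relation.ReflTransGen.head hdir hdesc⟩
        · have hcol : colliderAt e₁ e₂ :=
            ⟨he₁, by cases e₂ <;> simp_all⟩
          rcases hcl with ⟨_, d, hd, hdesc⟩ | ⟨hnc, _⟩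
          · exact ⟨d, hd, hdesc⟩
          · exact absurd hcol hnc
      · rw [contract, if_neg hpi] at hL
        obtain ⟨hp, -⟩ := List.cons_eq_cons.mp hL
        have he2 : e₂ = e' := congrArg Prod.fst hp
        have hcol : colliderAt e₁ e₂ := ⟨he₁, he2 ▸ he'⟩
        rcases hcl with ⟨_, d, hd, hdesc⟩ | ⟨hnc, _⟩
        · exact ⟨d, hd, hdesc⟩
        · exact absurd hcol hnc

/-- If the first cluster-crossing edge leaves the segment with a tail,
the exit vertex is a non-collider, so the whole cluster avoids `Z`. -/
lemma exit_tail (G : MixedGraph V) (π : V → I) (Z : Set I) :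
    ∀ (w : List (EType × V)) (a : V) (e₁ : EType),
      G.Active {v | π v ∈ Z} ((e₁, a) :: w) →
      ∀ c' L', contract π a w = (EType.fwd, c') :: L' →
      π a ∉ Z := by
  intro w
  induction w with
  | nil =>
      intro a e₁ _ c' L' hL
      rw [contract] at hL
      exact absurd hL (by simp)
  | cons p rest ih =>
      obtain ⟨e₂, b⟩ := p
      intro a e₁ hact c' L' hL
      obtain ⟨hcl, hactrest⟩ := hact
      by_cases hpi : π a = π b
      · rw [contract, if_pos hpi] at hL
        rw [hpi]
        exact ih b e₂ hactrest c' L' hL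
      · rw [contract, if_neg hpi] at hL
        obtain ⟨hp, -⟩ := List.cons_eq_cons.mp hL
        have he2 : e₂ = EType.fwd := congrArg Prod.fst hp
        subst he2
        rcases hcl with ⟨⟨-, hc2⟩, -⟩ | ⟨-, ha⟩
        · rcases hc2 with h | h <;> exact absurd h (by simp)
        · exact ha

/-- Prepending the crossing edge into a cluster keeps the contracted walk
active. -/
lemma clause_cons (G : MixedGraph V) (π : V → I) (Z : Set I)
    (w : List (EType × V)) (a : V) (e₁ : EType)
    (hw : G.IsWalk a w)
    (hact : G.Active {v | π v ∈ Z} ((e₁, a) :: w))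
    (htail : (G.quot π).Active Z (contract π a w)) :
    (G.quot π).Active Z ((e₁, π a) :: contract π a w) := by
  rcases hL : contract π a w with _ | ⟨⟨e', c'⟩, L'⟩
  · trivial
  · rw [hL] at htail
    refine ⟨?_, htail⟩
    by_cases hcol : colliderAt e₁ e'
    · obtain ⟨d, hd, hdesc⟩ :=
        exit_collider G π Z w a e₁ hcol.1 hw hact e' c' L' hL hcol.2
      exact Or.inl ⟨hcol, π d, hd, quot_desc G π hdesc⟩
    · refine Or.inr ⟨hcol, ?_⟩
      have hdich : e₁ = EType.bwd ∨ e' = EType.fwd := by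
        cases e₁ <;> cases e' <;> simp_all [colliderAt]
      rcases hdich with h1 | h2
      · subst h1
        cases w with
        | nil => rw [contract] at hL; exact absurd hL (by simp)
        | cons p rest =>
            obtain ⟨e₂, b⟩ := p
            obtain ⟨hcl, -⟩ := hact
            rcases hcl with ⟨⟨hc1, -⟩, -⟩ | ⟨-, ha⟩
            · rcases hc1 with h | h <;> exact absurd h (by simp)
            · exact ha
      · subst h2
        exact exit_tail G π Z w a e₁ hact c' L' hL

/-- The contracted walk is active in the quotient. -/
lemma contract_active (G : MixedGraph V) (π : V → I) (Z : Set I) :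
    ∀ (w : List (EType × V)) (a : V),
      G.IsWalk a w → G.Active {v | π v ∈ Z} w →
      (G.quot π).Active Z (contract π a w) := by
  intro w
  induction w with
  | nil => intro a _ _; trivial
  | cons p rest ih =>
      obtain ⟨e₂, b⟩ := p
      intro a hw hact
      obtain ⟨hstep, hwrest⟩ := hw
      have htail : (G.quot π).Active Z (contract π b rest) :=
        ih b hwrest (active_tail G hact)
      by_cases hpi : π a = π b
      · rw [contract, if_pos hpi]
        exact htail
      · rw [contract, if_neg hpi]
        exact clause_cons G π Z rest b e₂ hwrest hact htail

end MixedGraph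

open MixedGraph in
/-- soundness of d-separation in C-DAGs: if the quotient C-DAG
is acyclic and `X`, `Y`, `Z` are disjoint sets of clusters with `X` and `Y`
d-separated by `Z` in the C-DAG, then the corresponding variable sets are
d-separated in `G`. -/
theorem stmt7 {V I : Type} (G : MixedGraph V) (π : V → I)
    (hsurj : Function.Surjective π) (hacyc : (G.quot π).Acyclic)
    (X Y Z : Set I)
    (hXY : Disjoint X Y) (hXZ : Disjoint X Z) (hYZ : Disjoint Y Z)
    (h : (G.quot π).DSep Z X Y) :
    G.DSep {v : V | π v ∈ Z} {v : V | π v ∈ X} {v : V | π v ∈ Y} := by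
  rintro ⟨x, hxX, w, hwne, hwalk, hend, hact⟩
  apply h
  have hπend : π (walkEnd x w) ∈ Y := hend
  have hne : π x ≠ π (walkEnd x w) := by
    intro heq
    exact Set.disjoint_left.mp hXY hxX (heq ▸ hπend)
  refine ⟨π x, hxX, contract π x w, contract_ne_nil π w x hne,
    contract_isWalk G π w x hwalk, ?_, contract_active G π Z w x hwalk hact⟩
  rw [← contract_end π w x]
  exact hπend
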